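/- Let α, β be partitions of d into at most n parts with α ⊵ β in dominance order. Then the polynomial [α] − [β] lies in the semiring S, i.e., ([α] − [β])(x₁²,…,xₙ²) is a sum of squares of polynomials (Muirhead's inequality as a sum of squares). -/

import Mathlib

open Finset MvPolynomial

/-- The normalized monomial symmetric polynomial `[α]`. -/
noncomputable def msym (n : ℕ) (α : Fin n → ℕ) : MvPolynomial (Fin n) ℝ :=
  ((n.factorial : ℝ))⁻¹ • ∑ σ : Equiv.Perm (Fin n), ∏ j, X (σ j) ^ α j

/-!
Let `j` be the first position with `α j < β j`; dominance at `j + 1` yields a position `i < j`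
with `β i < α i`. Moving one unit of exponent from `i` to `j` (a Robin Hood transfer) keeps
`α ⊵ β` and brings `α` closer to `β`, so `[α] - [β]` telescopes into differences
`[γ + eᵢ] - [γ + eⱼ]` with `γ j ≤ γ i`. Pairing each permutation `σ` with `σ * swap i j`, such a
difference at the squares `xₖ²` becomes a sum over `σ` of `(u - v)² (uv)^b ∑ₛ uˢ v^(c-1-s)`
times a square monomial, where `u = x_{σ i}²`, `v = x_{σ j}²`, `b = γ j` and `c = γ i - γ j`.
-/

section Dominance

variable {n : ℕ}

def prefixSum (α : Fin n → ℕ) (k : ℕ) : ℕ :=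
  ∑ i ∈ univ.filter (fun i : Fin n => (i : ℕ) < k), α i

theorem prefixSum_add_single (γ : Fin n → ℕ) (i : Fin n) (k : ℕ) :
    prefixSum (γ + Pi.single i 1) k = prefixSum γ k + if (i : ℕ) < k then 1 else 0 := by
  simp [prefixSum, sum_add_distrib, sum_pi_single']

theorem prefixSum_succ (α : Fin n → ℕ) (j : Fin n) :
    prefixSum α (j + 1) = prefixSum α j + α j := by
  have : univ.filter (fun i : Fin n => (i : ℕ) < j + 1)
      = insert j (univ.filter (fun i : Fin n => (i : ℕ) < j)) := by
    ext l
    simp only [mem_filter, mem_insert, mem_univ, true_and, Fin.ext_iff]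
    omega
  rw [prefixSum, this, sum_insert (by simp), add_comm]
  rfl

theorem exists_transfer_indices {α β : Fin n → ℕ} (hsum : ∑ i, α i = ∑ i, β i)
    (hdom : ∀ k, prefixSum β k ≤ prefixSum α k) (hne : α ≠ β) :
    ∃ i j, i < j ∧ β i < α i ∧ α j < β j ∧ ∀ l < j, β l ≤ α l := by
  have deficit : (univ.filter fun k => α k < β k).Nonempty := by
    by_contra! hempty
    refine hne (funext fun k => ?_)
    have hle : ∀ k ∈ univ, β k ≤ α k := fun k _ => not_lt.1 fun hk =>
      (filter_eq_empty_iff.1 hempty) (mem_univ k) hk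
    exact ((sum_eq_sum_iff_of_le hle).1 hsum.symm k (mem_univ k)).symm
  obtain ⟨j, hj, hjmin⟩ := exists_min_image _ id deficit
  simp only [mem_filter, mem_univ, true_and, id] at hj hjmin
  have before : ∀ l < j, β l ≤ α l := fun l hl => not_lt.1 fun h => (hjmin l h).not_gt hl
  have hlt : prefixSum β j < prefixSum α j := by
    have := hdom (j + 1)
    rw [prefixSum_succ, prefixSum_succ] at this
    omega
  obtain ⟨i, hi, hβα⟩ := exists_lt_of_sum_lt hlt
  simp only [mem_filter, mem_univ, true_and] at hi
  exact ⟨i, j, hi, hβα, hj, before⟩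

theorem prefixSum_le_of_transfer {α β γ : Fin n → ℕ} {i j : Fin n} (hij : i < j)
    (hα : γ + Pi.single i 1 = α) (hdom : ∀ k, prefixSum β k ≤ prefixSum α k) (hi : β i < α i)
    (before : ∀ l < j, β l ≤ α l) (k : ℕ) :
    prefixSum β k ≤ prefixSum (γ + Pi.single j 1) k := by
  have hk := hdom k
  rw [← hα, prefixSum_add_single] at hk
  rw [prefixSum_add_single]
  by_cases hik : (i : ℕ) < k
  · by_cases hjk : (j : ℕ) < k
    · simpa only [hik, hjk, if_true] using hk
    · have strict : prefixSum β k < prefixSum α k := by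
        refine sum_lt_sum (fun l hl => before l ?_) ⟨i, by simpa using hik, hi⟩
        simp only [mem_filter, mem_univ, true_and] at hl
        exact Fin.lt_def.2 (by omega)
      rw [← hα, prefixSum_add_single] at strict
      simp only [hik, if_true] at strict
      omega
  · have hjk : ¬ (j : ℕ) < k := fun h => hik (lt_trans hij h)
    simpa only [hik, hjk, if_false] using hk

theorem sum_tsub_lt_of_transfer {α β γ : Fin n → ℕ} {i j : Fin n} (hij : i ≠ j)
    (hα : γ + Pi.single i 1 = α) (hi : β i < α i) (hj : α j < β j) :
    ∑ k, ((γ + Pi.single j 1 : Fin n → ℕ) k - β k) < ∑ k, (α k - β k) := by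
  subst hα
  simp only [Pi.add_apply, Pi.single_eq_same, Pi.single_eq_of_ne hij.symm, add_zero] at hi hj
  refine sum_lt_sum (fun k _ => ?_) ⟨i, mem_univ i, ?_⟩
  · simp only [Pi.add_apply, Pi.single_apply]
    split_ifs <;> subst_vars <;> omega
  · simp only [Pi.add_apply, Pi.single_eq_same, Pi.single_eq_of_ne hij, add_zero]
    omega

theorem isSumSq_sub_of_prefixSum_le {A : Type*} [AddGroup A] [Mul A] (f : (Fin n → ℕ) → A)
    (hf : ∀ (γ : Fin n → ℕ) (i j : Fin n), i < j → γ j ≤ γ i →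
      IsSumSq (f (γ + Pi.single i 1) - f (γ + Pi.single j 1)))
    {α β : Fin n → ℕ} (hβ : ∀ i j : Fin n, i ≤ j → β j ≤ β i) (hsum : ∑ i, α i = ∑ i, β i)
    (hdom : ∀ k, prefixSum β k ≤ prefixSum α k) : IsSumSq (f α - f β) := by
  induction hm : ∑ k, (α k - β k) using Nat.strong_induction_on generalizing α with
  | _ m ih =>
  by_cases hne : α = β
  · rw [hne, sub_self]
    exact IsSumSq.zero
  obtain ⟨i, j, hij, hi, hj, before⟩ := exists_transfer_indices hsum hdom hne
  set γ := α - Pi.single i 1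
  have hα : γ + Pi.single i 1 = α := by
    ext k
    simp only [γ, Pi.add_apply, Pi.sub_apply, Pi.single_apply]
    split_ifs <;> subst_vars <;> omega
  have hγ : γ j ≤ γ i := by
    have := hβ i j hij.le
    simp only [γ, Pi.sub_apply, Pi.single_eq_same, Pi.single_eq_of_ne hij.ne.symm, tsub_zero]
    omega
  have hsum' : ∑ k, (γ + Pi.single j 1 : Fin n → ℕ) k = ∑ k, β k := by
    rw [← hsum, ← hα]
    simp [sum_add_distrib]
  rw [← sub_add_sub_cancel _ (f (γ + Pi.single j 1)), ← hα]
  exact (hf γ i j hij hγ).add <| ih _ (hm ▸ sum_tsub_lt_of_transfer hij.ne hα hi hj) hsum'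
    (prefixSum_le_of_transfer hij hα hdom hi before) rfl

end Dominance

theorem IsSumSq.smul_of_nonneg {A : Type*} [CommSemiring A] [Algebra ℝ A] {r : ℝ} (hr : 0 ≤ r)
    {p : A} (hp : IsSumSq p) : IsSumSq (r • p) := by
  rw [Algebra.smul_def, ← Real.mul_self_sqrt hr, map_mul]
  exact (IsSumSq.mul_self _).mul hp

section SymmetricSum

variable {ι A : Type*} [Fintype ι] [DecidableEq ι] [CommRing A]

def symSum (x : ι → A) (e : ι → ℕ) : A :=
  ∑ σ : Equiv.Perm ι, ∏ k, x (σ k) ^ e k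

theorem map_symSum {B F : Type*} [CommRing B] [FunLike F A B] [RingHomClass F A B] (f : F)
    (x : ι → A) (e : ι → ℕ) :
    f (symSum x e) = symSum (f ∘ x) e := by
  simp only [symSum, map_sum, map_prod, map_pow, Function.comp_apply]

theorem transfer_sub_eq_sq_mul_geom_sum₂ (u v : A) (b c : ℕ) :
    u ^ (b + c + 1) * v ^ b + u ^ b * v ^ (b + c + 1) - u ^ (b + c) * v ^ (b + 1)
        - u ^ (b + 1) * v ^ (b + c)
      = (u - v) ^ 2 * (u * v) ^ b * ∑ s ∈ range c, u ^ s * v ^ (c - 1 - s) := by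
  have h := geom_sum₂_mul u v c
  linear_combination -(u - v) * (u * v) ^ b * h

theorem isSumSq_sq_transfer_sub (x y : A) (b c : ℕ) :
    IsSumSq ((x ^ 2) ^ (b + c + 1) * (y ^ 2) ^ b + (x ^ 2) ^ b * (y ^ 2) ^ (b + c + 1)
      - (x ^ 2) ^ (b + c) * (y ^ 2) ^ (b + 1) - (x ^ 2) ^ (b + 1) * (y ^ 2) ^ (b + c)) := by
  rw [transfer_sub_eq_sq_mul_geom_sum₂]
  refine (((IsSquare.sq _).mul (((IsSquare.sq x).mul (IsSquare.sq y)).pow b)).isSumSq).mul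
    (IsSumSq.sum fun s _ => ?_)
  exact (((IsSquare.sq x).pow s).mul ((IsSquare.sq y).pow _)).isSumSq

open Equiv in
theorem isSumSq_prod_transfer_add_swap {i j : ι} (hij : i ≠ j) {γ : ι → ℕ} (h : γ j ≤ γ i)
    (y : ι → A) :
    IsSumSq (∏ k, (y k ^ 2) ^ (γ + Pi.single i 1 : ι → ℕ) k
      + ∏ k, (y (swap i j k) ^ 2) ^ (γ + Pi.single i 1 : ι → ℕ) k
      - ∏ k, (y k ^ 2) ^ (γ + Pi.single j 1 : ι → ℕ) k
      - ∏ k, (y (swap i j k) ^ 2) ^ (γ + Pi.single j 1 : ι → ℕ) k) := by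
  obtain ⟨c, hc⟩ := Nat.exists_eq_add_of_le h
  have pair_split : ∀ f : ι → A, ∏ k, f k = f i * f j * ∏ k ∈ {i, j}ᶜ, f k := fun f => by
    rw [← prod_mul_prod_compl {i, j}, prod_pair hij]
  have rest : ∀ (z : ι → A) (e : ι → ℕ), (∀ k, k ≠ i → k ≠ j → z k = y k ∧ e k = γ k) →
      ∏ k ∈ {i, j}ᶜ, (z k ^ 2) ^ e k = ∏ k ∈ {i, j}ᶜ, (y k ^ 2) ^ γ k := fun z e hze =>
    prod_congr rfl fun k hk => by
      simp only [compl_insert, mem_erase, mem_compl, mem_singleton] at hk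
      rw [(hze k hk.1 hk.2).1, (hze k hk.1 hk.2).2]
  simp only [pair_split (fun k => (y _ ^ 2) ^ _)]
  rw [rest y (γ + Pi.single i 1) fun k hki hkj => by simp [Pi.single_eq_of_ne hki],
    rest y (γ + Pi.single j 1) fun k hki hkj => by simp [Pi.single_eq_of_ne hkj],
    rest (fun k => y (swap i j k)) (γ + Pi.single i 1) fun k hki hkj => by
      simp [Pi.single_eq_of_ne hki, swap_apply_of_ne_of_ne hki hkj],
    rest (fun k => y (swap i j k)) (γ + Pi.single j 1) fun k hki hkj => by
      simp [Pi.single_eq_of_ne hkj, swap_apply_of_ne_of_ne hki hkj]]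
  simp only [Pi.add_apply, Pi.single_eq_same, Pi.single_eq_of_ne hij, Pi.single_eq_of_ne hij.symm,
    swap_apply_left, swap_apply_right, hc, add_zero]
  convert (isSumSq_sq_transfer_sub (y i) (y j) (γ j) c).mul
    (IsSumSq.prod fun k _ => ((IsSquare.sq (y k)).pow (γ k)).isSumSq) using 1
  ring

theorem isSumSq_two_mul_symSum_sub (x : ι → A) {i j : ι} (hij : i ≠ j) {γ : ι → ℕ}
    (h : γ j ≤ γ i) :
    IsSumSq (2 * (symSum (fun k => x k ^ 2) (γ + Pi.single i 1)
      - symSum (fun k => x k ^ 2) (γ + Pi.single j 1))) := by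
  have swap_invariant : ∀ e, symSum (fun k => x k ^ 2) e
      = ∑ σ : Equiv.Perm ι, ∏ k, (x (σ (Equiv.swap i j k)) ^ 2) ^ e k := fun e =>
    (Equiv.sum_comp (Equiv.mulRight (Equiv.swap i j)) _).symm
  have : 2 * (symSum (fun k => x k ^ 2) (γ + Pi.single i 1)
      - symSum (fun k => x k ^ 2) (γ + Pi.single j 1))
      = ∑ σ : Equiv.Perm ι, (∏ k, (x (σ k) ^ 2) ^ (γ + Pi.single i 1 : ι → ℕ) k
        + ∏ k, (x (σ (Equiv.swap i j k)) ^ 2) ^ (γ + Pi.single i 1 : ι → ℕ) k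
        - ∏ k, (x (σ k) ^ 2) ^ (γ + Pi.single j 1 : ι → ℕ) k
        - ∏ k, (x (σ (Equiv.swap i j k)) ^ 2) ^ (γ + Pi.single j 1 : ι → ℕ) k) := by
    simp only [sum_sub_distrib, sum_add_distrib]
    rw [← swap_invariant, ← swap_invariant]
    unfold symSum
    ring
  rw [this]
  exact IsSumSq.sum fun σ _ => isSumSq_prod_transfer_add_swap hij h (x ∘ σ)

end SymmetricSum

theorem bind₁_sq_msym (n : ℕ) (e : Fin n → ℕ) :
    bind₁ (fun i : Fin n => (X i : MvPolynomial (Fin n) ℝ) ^ 2) (msym n e)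
      = ((n.factorial : ℝ))⁻¹ • symSum (fun i => X i ^ 2) e := by
  rw [msym, map_smul, ← symSum, map_symSum]
  congr 2
  ext1 i
  exact bind₁_X_right _ i

theorem isSumSq_bind₁_sq_msym_sub_transfer (n : ℕ) {γ : Fin n → ℕ} {i j : Fin n} (hij : i ≠ j)
    (hγ : γ j ≤ γ i) :
    IsSumSq (bind₁ (fun k : Fin n => (X k : MvPolynomial (Fin n) ℝ) ^ 2)
        (msym n (γ + Pi.single i 1))
      - bind₁ (fun k : Fin n => (X k : MvPolynomial (Fin n) ℝ) ^ 2)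
        (msym n (γ + Pi.single j 1))) := by
  rw [bind₁_sq_msym, bind₁_sq_msym, ← smul_sub]
  set p := symSum (fun k => (X k : MvPolynomial (Fin n) ℝ) ^ 2) (γ + Pi.single i 1)
    - symSum (fun k => X k ^ 2) (γ + Pi.single j 1)
  have halve : p = (2 : ℝ)⁻¹ • (2 * p) := by
    rw [two_mul, ← two_smul ℝ, smul_smul, inv_mul_cancel₀ two_ne_zero, one_smul]
  rw [halve, smul_smul]
  exact (isSumSq_two_mul_symSum_sub X hij hγ).smul_of_nonneg (by positivity)

theorem muirhead_sos_general (n d : ℕ) (α β : Fin n → ℕ)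
    (hβ : ∀ i j : Fin n, i ≤ j → β j ≤ β i)
    (hαd : ∑ i, α i = d) (hβd : ∑ i, β i = d)
    (hdom : ∀ k : ℕ, ∑ i ∈ univ.filter (fun i : Fin n => (i : ℕ) < k), β i ≤
      ∑ i ∈ univ.filter (fun i : Fin n => (i : ℕ) < k), α i) :
    IsSumSq (bind₁ (fun i : Fin n => (X i : MvPolynomial (Fin n) ℝ) ^ 2)
      (msym n α - msym n β)) := by
  rw [map_sub]
  exact isSumSq_sub_of_prefixSum_le (fun e => bind₁ (fun i => X i ^ 2) (msym n e))
    (fun _ _ _ hij hγ => isSumSq_bind₁_sq_msym_sub_transfer n hij.ne hγ) hβ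
    (hαd.trans hβd.symm) hdom

theorem muirhead_sos (n d : ℕ) (α β : Fin n → ℕ)
    (hα : ∀ i j : Fin n, i ≤ j → α j ≤ α i) (hβ : ∀ i j : Fin n, i ≤ j → β j ≤ β i)
    (hαd : ∑ i, α i = d) (hβd : ∑ i, β i = d)
    (hdom : ∀ k : ℕ, ∑ i ∈ univ.filter (fun i : Fin n => (i : ℕ) < k), β i ≤
      ∑ i ∈ univ.filter (fun i : Fin n => (i : ℕ) < k), α i) :
    IsSumSq (bind₁ (fun i : Fin n => (X i : MvPolynomial (Fin n) ℝ) ^ 2)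
      (msym n α - msym n β)) :=
  muirhead_sos_general n d α β hβ hαd hβd hdom
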